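/- For every full rook placement S on a Young diagram with n rows all of whose blocks have size at most 2, the fiber Π_n^{-1}(S) of the empty-column-deletion projection from rook placements on 2δ_n has cardinality 2^{bso(S)}, where bso(S) is the number of blocks of size 1 in S. -/

import Mathlib

/-!
A rook placement in the fiber over `S` is determined by its set `O` of occupied columns, the rook
of row `i` being the element of `O` of rank `S.1.2 i`. The row lengths of `S` count the elements
of `O` among the first `2(i+1)` columns, so they fix the number of elements of `O` in each block
`{2m, 2m+1}` of `2δ_n`: it is the number `dₘ` of columns of `S` whose topmost row is row `m`,
that is the size of a block of `S`, or `0`. Conversely every `O` with these block counts occurs.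
Choosing `O` block by block gives `∏ₘ (2 choose dₘ)`, which for `dₘ ≤ 2` is `2` to the number
of blocks of size one.
-/

/-- Rook placements on the double staircase `2δ_n`: one rook per row (row `i`,
numbered from the top starting at `0`, has `2*(i+1)` cells), at most one rook
per column. -/
def RookPlacement (n : ℕ) :=
  {r : Fin n → Fin (2 * n) //
    Function.Injective r ∧ ∀ i : Fin n, (r i : ℕ) < 2 * (i.val + 1)}

/-- Column `c` (0-indexed) of the rook placement `R` contains a rook. -/
def Occupied {n : ℕ} (R : RookPlacement n) (c : ℕ) : Prop :=
  ∃ j : Fin n, (R.1 j : ℕ) = c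

/-- The number of rooks in block `i` of `R` (block `i` consists of the two
columns `2i` and `2i+1`, 0-indexed). -/
def blockRooks {n : ℕ} (R : RookPlacement n) (i : Fin n) : ℕ :=
  (Finset.univ.filter (fun j : Fin n => (R.1 j : ℕ) / 2 = i.val)).card

/-- `R` is left-aligned: no block has a rook in its right column without a rook
in its left column. -/
def LeftAligned {n : ℕ} (R : RookPlacement n) : Prop :=
  ∀ i : Fin n, Occupied R (2 * i.val + 1) → Occupied R (2 * i.val)

/-- `R` is right-aligned: no block has a rook in its left column without a rook
in its right column. -/
def RightAligned {n : ℕ} (R : RookPlacement n) : Prop :=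
  ∀ i : Fin n, Occupied R (2 * i.val) → Occupied R (2 * i.val + 1)

/-- `bor R` is the number of blocks of `R` containing exactly one rook. -/
def bor {n : ℕ} (R : RookPlacement n) : ℕ :=
  (Finset.univ.filter (fun i : Fin n => blockRooks R i = 1)).card

/-- A full rook placement on a Young diagram with `n` rows fitting in an
`n × n` box (drawn in French notation).  `p.1 i` is the length of row `i`
(rows numbered from the top, so `p.1` is monotone) and `p.2 i` is the
(0-indexed) column of the rook of row `i`; there is exactly one rook in each
row and in each column (`p.2` is a bijection). -/
abbrev FullPlacement (n : ℕ) :=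
  {p : (Fin n → Fin (n + 1)) × (Fin n → Fin n) //
    (∀ i j : Fin n, i ≤ j → p.1 i ≤ p.1 j) ∧ Function.Bijective p.2 ∧
      ∀ i : Fin n, (p.2 i : ℕ) < (p.1 i : ℕ)}

/-- The height of column `c` of the Young diagram underlying `S`. -/
def colHeight {n : ℕ} (S : FullPlacement n) (c : Fin n) : ℕ :=
  (Finset.univ.filter (fun i : Fin n => (c : ℕ) < (S.1.1 i : ℕ))).card

/-- The size of the block (maximal set of columns of equal height) containing
column `c`. -/
def blockSize {n : ℕ} (S : FullPlacement n) (c : Fin n) : ℕ :=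
  (Finset.univ.filter (fun c' : Fin n => colHeight S c' = colHeight S c)).card

/-- `bso S` is the number of blocks of size `1` of `S`. -/
def bso {n : ℕ} (S : FullPlacement n) : ℕ :=
  (Finset.univ.filter (fun c : Fin n => blockSize S c = 1)).card

attribute [local instance] Classical.propDecidable

/-- `Projects R S` says that `S` is obtained from the rook placement `R` on the
double staircase `2δ_n` by deleting all empty columns (the projection `Π_n`):
the length of row `i` of `S` is the number of occupied columns of `R` among the
`2(i+1)` columns of row `i`, and the column of the rook of row `i` in `S` is
the number of occupied columns of `R` strictly to the left of the rook of row
`i` of `R`. -/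
def Projects {n : ℕ} (R : RookPlacement n) (S : FullPlacement n) : Prop :=
  (∀ i : Fin n, (S.1.1 i : ℕ) =
      (Finset.univ.filter
        (fun c : Fin (2 * n) => Occupied R (c : ℕ) ∧ (c : ℕ) < 2 * (i.val + 1))).card) ∧
  (∀ i : Fin n, (S.1.2 i : ℕ) =
      (Finset.univ.filter
        (fun c : Fin (2 * n) => Occupied R (c : ℕ) ∧ (c : ℕ) < (R.1 i : ℕ))).card)

-- The line above makes `Classical.propDecidable` a default-priority instance shadowing the usual
-- ones; only `Projects` is stated with it.
attribute [-instance] Classical.propDecidable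

open Finset

theorem prod_choose_two_eq_pow {ι : Type*} [Fintype ι] (d : ι → ℕ) (hd : ∀ i, d i ≤ 2) :
    ∏ i, (2 : ℕ).choose (d i) = 2 ^ #{i | d i = 1} := by
  rw [← prod_const, prod_filter]
  refine prod_congr rfl fun i _ => ?_
  rcases (show d i = 0 ∨ d i = 1 ∨ d i = 2 by have := hd i; omega) with h | h | h <;> simp [h]

section Fibers

variable {α β : Type*} [Fintype α] [Fintype β] [DecidableEq β]

theorem card_filter_card_fiber_eq_one (f : α → β) :
    #{a | #{a' | f a' = f a} = 1} = #{b | #{a | f a = b} = 1} := by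
  refine card_bij (fun a _ => f a) (fun a ha => by simpa using ha) ?_ ?_
  · intro a ha a' _ h
    simp only [mem_filter, mem_univ, true_and] at ha
    exact card_le_one.1 ha.le a (by simp) a' (by simp [h])
  · intro b hb
    simp only [mem_filter, mem_univ, true_and] at hb
    obtain ⟨a, ha⟩ := card_eq_one.1 hb
    have hfa : f a = b := by simpa using ha.ge (mem_singleton_self a)
    exact ⟨a, by simp [hfa, hb], hfa⟩

theorem card_finset_forall_card_fiber_eq [DecidableEq α] (f : α → β) (d : β → ℕ) :
    Nat.card {s : Finset α // ∀ b, #{a ∈ s | f a = b} = d b} =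
      ∏ b, (#{a | f a = b}).choose (d b) := by
  rw [Nat.card_eq_fintype_card, Fintype.card_subtype]
  simp_rw [← card_powersetCard, ← Fintype.card_piFinset]
  have hfibers : ∀ g ∈ Fintype.piFinset fun b => powersetCard (d b) {a | f a = b},
      ∀ b, {a ∈ univ.filter fun a => a ∈ g (f a) | f a = b} = g b := by
    intro g hg b
    ext a
    have hsub := (mem_powersetCard.1 (Fintype.mem_piFinset.1 hg b)).1
    simp only [mem_filter, mem_univ, true_and]
    refine ⟨fun ⟨ha, hab⟩ => hab ▸ ha, fun ha => ?_⟩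
    obtain rfl : f a = b := (mem_filter.1 (hsub ha)).2
    exact ⟨ha, rfl⟩
  refine card_nbij' (fun s b => {a ∈ s | f a = b}) (fun g => univ.filter fun a => a ∈ g (f a))
    ?_ ?_ ?_ ?_
  · intro s hs
    simp only [coe_filter, mem_univ, true_and, Set.mem_ofPred_eq] at hs
    simp only [Fintype.coe_piFinset, Set.mem_pi, Set.mem_univ, mem_coe, mem_powersetCard]
    exact fun b _ => ⟨filter_subset_filter _ (subset_univ s), hs b⟩
  · intro g hg
    simp only [coe_filter, mem_univ, true_and, Set.mem_ofPred_eq, hfibers g hg]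
    exact fun b => (mem_powersetCard.1 (Fintype.mem_piFinset.1 hg b)).2
  · intro s _
    ext a
    simp
  · exact fun g hg => funext (hfibers g hg)

end Fibers

section Prefix

variable {ι : Type*} [LinearOrder ι] [LocallyFiniteOrderBot ι]

theorem card_filter_le_eq_sum_card_filter_eq {α : Type*} (s : Finset α) (f : α → ι) (i : ι) :
    #{a ∈ s | f a ≤ i} = ∑ j ∈ Iic i, #{a ∈ s | f a = j} := by
  rw [sum_card_fiberwise_eq_card_filter]
  simp only [mem_Iic]

variable [WellFoundedLT ι]

theorem eq_of_forall_sum_Iic_eq {M : Type*} [AddCancelCommMonoid M] {a b : ι → M}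
    (h : ∀ i, ∑ j ∈ Iic i, a j = ∑ j ∈ Iic i, b j) : a = b := by
  funext i
  induction i using WellFoundedLT.induction with
  | _ i ih =>
    have hi := h i
    rw [← Iio_insert, sum_insert notMem_Iio_self, sum_insert notMem_Iio_self,
      sum_congr rfl fun j hj => ih j (mem_Iio.1 hj)] at hi
    exact add_right_cancel hi

theorem forall_card_filter_le_eq_iff {α β : Type*} (s : Finset α) (t : Finset β)
    (f : α → ι) (g : β → ι) :
    (∀ i, #{a ∈ s | f a ≤ i} = #{b ∈ t | g b ≤ i}) ↔
      ∀ i, #{a ∈ s | f a = i} = #{b ∈ t | g b = i} := by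
  simp only [card_filter_le_eq_sum_card_filter_eq]
  exact ⟨fun h i => congrFun (eq_of_forall_sum_Iic_eq h) i, fun h i => by simp only [h]⟩

end Prefix

section Rank

variable {α : Type*} [LinearOrder α] {s : Finset α} {k : ℕ} (h : #s = k)

theorem card_filter_lt_orderEmbOfFin (j : Fin k) : #{x ∈ s | x < s.orderEmbOfFin h j} = j := by
  have hs := s.image_orderEmbOfFin_univ h
  generalize s.orderEmbOfFin h = e at hs ⊢
  rw [← hs, filter_image, card_image_of_injective _ e.injective]
  simp only [OrderEmbedding.lt_iff_lt, filter_gt_eq_Iio, Fin.card_Iio]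

theorem orderEmbOfFin_eq_of_card_filter_lt {x : α} (hx : x ∈ s) {j : Fin k}
    (hj : #{y ∈ s | y < x} = j) : s.orderEmbOfFin h j = x := by
  obtain ⟨j', rfl⟩ : x ∈ Set.range (s.orderEmbOfFin h) := by rwa [range_orderEmbOfFin]
  rw [card_filter_lt_orderEmbOfFin] at hj
  rw [Fin.ext hj]

end Rank

variable {n : ℕ}

def stairBlock (c : Fin (2 * n)) : Fin n := ⟨c / 2, by omega⟩

theorem card_stairBlock_eq (m : Fin n) : #{c : Fin (2 * n) | stairBlock c = m} = 2 := by
  have hpair : ({c : Fin (2 * n) | stairBlock c = m} : Finset _) =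
      {⟨2 * m, by omega⟩, ⟨2 * m + 1, by omega⟩} := by
    ext c
    simp only [stairBlock, mem_filter, mem_univ, true_and, mem_insert, mem_singleton, Fin.ext_iff]
    omega
  rw [hpair, card_pair (by simp [Fin.ext_iff])]

def occupiedCols (R : RookPlacement n) : Finset (Fin (2 * n)) := univ.image R.1

theorem mem_occupiedCols {R : RookPlacement n} {c : Fin (2 * n)} :
    c ∈ occupiedCols R ↔ Occupied R c := by
  simp [occupiedCols, Occupied, Fin.ext_iff]

theorem projects_iff {R : RookPlacement n} {S : FullPlacement n} :
    Projects R S ↔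
      (∀ i : Fin n, (S.1.1 i : ℕ) = #{c ∈ occupiedCols R | c.val < 2 * (i.val + 1)}) ∧
        ∀ i : Fin n, (S.1.2 i : ℕ) = #{c ∈ occupiedCols R | c < R.1 i} := by
  have hcols (P : Fin (2 * n) → Prop) [DecidablePred P]
      (_ : DecidablePred fun c : Fin (2 * n) => Occupied R c ∧ P c) :
      (univ.filter fun c : Fin (2 * n) => Occupied R c ∧ P c) = {c ∈ occupiedCols R | P c} := by
    ext c
    simp [mem_occupiedCols]
  simp only [Projects, hcols, Fin.val_fin_lt]

section Shape

variable (S : FullPlacement n)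

/-- The topmost row containing column `k`. Columns with the same value form a block of `S`,
and the value `m` matches that block with the block of columns `2m, 2m + 1` of `2δ_n`. -/
def shapeBlock (k : Fin n) : Fin n :=
  ⟨#{j | (S.1.1 j : ℕ) ≤ k}, by
    obtain ⟨j, rfl⟩ := S.2.2.1.2 k
    simpa using card_lt_univ_of_notMem (x := j) (by simpa using S.2.2.2 j)⟩

theorem shapeBlock_le_iff (k i : Fin n) : shapeBlock S k ≤ i ↔ (k : ℕ) < S.1.1 i := by
  rw [Fin.le_def, shapeBlock, Fin.val_mk]
  constructor
  · intro h
    by_contra! hik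
    have hsub : Iic i ⊆ ({j | (S.1.1 j : ℕ) ≤ k} : Finset (Fin n)) := fun j hj => by
      simpa using (Fin.le_def.1 (S.2.1 j i (mem_Iic.1 hj))).trans hik
    have := card_le_card hsub
    rw [Fin.card_Iic] at this
    omega
  · intro hik
    have hsub : ({j | (S.1.1 j : ℕ) ≤ k} : Finset (Fin n)) ⊆ Iio i := fun j hj => by
      simp only [mem_filter, mem_univ, true_and] at hj
      by_contra! hij
      exact absurd ((Fin.le_def.1 (S.2.1 i j (by simpa using hij))).trans hj) (by omega)
    simpa using card_le_card hsub

theorem card_shapeBlock_le (i : Fin n) : #{k | shapeBlock S k ≤ i} = S.1.1 i := by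
  simp only [shapeBlock_le_iff, Fin.card_filter_val_lt]
  exact min_eq_right (Nat.lt_succ_iff.1 (S.1.1 i).2)

theorem colHeight_eq (k : Fin n) : colHeight S k = n - shapeBlock S k := by
  have := card_filter_add_card_filter_not (s := univ) fun j : Fin n => (S.1.1 j : ℕ) ≤ k
  simp only [not_le, card_univ, Fintype.card_fin] at this
  simp only [colHeight, shapeBlock]
  omega

theorem blockSize_eq (k : Fin n) : blockSize S k = #{k' | shapeBlock S k' = shapeBlock S k} := by
  simp only [blockSize, colHeight_eq]
  congr! 3 with k'
  have := (shapeBlock S k).2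
  have := (shapeBlock S k').2
  omega

theorem bso_eq : bso S = #{m | #{k | shapeBlock S k = m} = 1} := by
  simp only [bso, blockSize_eq]
  exact card_filter_card_fiber_eq_one _

theorem card_shapeBlock_fiber_le_two (hS : ∀ k : Fin n, blockSize S k ≤ 2) (m : Fin n) :
    #{k | shapeBlock S k = m} ≤ 2 := by
  obtain hm | ⟨k, hk⟩ := (univ.filter fun k => shapeBlock S k = m).eq_empty_or_nonempty
  · simp [hm]
  · rw [← (mem_filter.1 hk).2, ← blockSize_eq]
    exact hS k

end Shape

section Fiber

variable (S : FullPlacement n)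

def HasBlockCounts (O : Finset (Fin (2 * n))) : Prop :=
  ∀ m, #{c ∈ O | stairBlock c = m} = #{k | shapeBlock S k = m}

variable {S}

theorem hasBlockCounts_iff {O : Finset (Fin (2 * n))} :
    HasBlockCounts S O ↔
      ∀ i : Fin n, (S.1.1 i : ℕ) = #{c ∈ O | c.val < 2 * (i.val + 1)} := by
  have hrow (i : Fin n) :
      #{c ∈ O | c.val < 2 * (i.val + 1)} = #{c ∈ O | stairBlock c ≤ i} := by
    congr 1
    refine filter_congr fun c _ => ?_
    simp only [stairBlock, Fin.le_def]
    omega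
  simp only [hrow, ← card_shapeBlock_le S, eq_comm (a := #{k | shapeBlock S k ≤ _})]
  exact (forall_card_filter_le_eq_iff _ _ _ _).symm

theorem HasBlockCounts.card_eq {O : Finset (Fin (2 * n))} (hO : HasBlockCounts S O) : #O = n := by
  rw [card_eq_sum_card_fiberwise (f := stairBlock) (t := univ) fun _ _ => mem_univ _,
    sum_congr rfl fun m _ => hO m, ← card_eq_sum_card_fiberwise fun _ _ => mem_univ _, card_univ,
    Fintype.card_fin]

theorem hasBlockCounts_occupiedCols {R : RookPlacement n} (hR : Projects R S) :
    HasBlockCounts S (occupiedCols R) :=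
  hasBlockCounts_iff.2 (projects_iff.1 hR).1

theorem orderEmbOfFin_lt_of_hasBlockCounts {O : Finset (Fin (2 * n))} (hO : HasBlockCounts S O)
    (i : Fin n) : (O.orderEmbOfFin hO.card_eq (S.1.2 i) : ℕ) < 2 * (i.val + 1) := by
  by_contra! h
  have hsub : {c ∈ O | c.val < 2 * (i.val + 1)} ⊆
      {c ∈ O | c < O.orderEmbOfFin hO.card_eq (S.1.2 i)} :=
    monotone_filter_right _ fun c _ hc => Fin.lt_def.2 (hc.trans_le h)
  have := card_le_card hsub
  rw [card_filter_lt_orderEmbOfFin, ← hasBlockCounts_iff.1 hO i] at this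
  exact absurd (S.2.2.2 i) (by omega)

def placementOfCols (O : Finset (Fin (2 * n))) (hO : HasBlockCounts S O) : RookPlacement n :=
  ⟨fun i => O.orderEmbOfFin hO.card_eq (S.1.2 i),
    (O.orderEmbOfFin hO.card_eq).injective.comp S.2.2.1.1,
    orderEmbOfFin_lt_of_hasBlockCounts hO⟩

theorem occupiedCols_placementOfCols {O : Finset (Fin (2 * n))} (hO : HasBlockCounts S O) :
    occupiedCols (placementOfCols O hO) = O := by
  change univ.image (O.orderEmbOfFin hO.card_eq ∘ S.1.2) = O
  rw [← image_image, image_univ_of_surjective S.2.2.1.2, image_orderEmbOfFin_univ]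

theorem projects_placementOfCols {O : Finset (Fin (2 * n))} (hO : HasBlockCounts S O) :
    Projects (placementOfCols O hO) S := by
  refine projects_iff.2 ⟨?_, fun i => ?_⟩ <;> rw [occupiedCols_placementOfCols]
  · exact hasBlockCounts_iff.1 hO
  · exact (card_filter_lt_orderEmbOfFin _ _).symm

theorem placementOfCols_occupiedCols {R : RookPlacement n} (hR : Projects R S) :
    placementOfCols (occupiedCols R) (hasBlockCounts_occupiedCols hR) = R := by
  refine Subtype.ext (funext fun i => orderEmbOfFin_eq_of_card_filter_lt _ ?_ ?_)
  · exact mem_occupiedCols.2 ⟨i, rfl⟩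
  · exact ((projects_iff.1 hR).2 i).symm

def fiberEquiv : {R : RookPlacement n // Projects R S} ≃ {O // HasBlockCounts S O} where
  toFun R := ⟨occupiedCols R.1, hasBlockCounts_occupiedCols R.2⟩
  invFun O := ⟨placementOfCols O.1 O.2, projects_placementOfCols O.2⟩
  left_inv R := Subtype.ext (placementOfCols_occupiedCols R.2)
  right_inv O := Subtype.ext (occupiedCols_placementOfCols O.2)

end Fiber

/-- For every full rook placement `S` on a Young diagram with `n` rows all of
whose blocks have size at most `2`, the fiber of the empty-column-deletion
projection `Π_n` over `S` has cardinality `2^{bso S}`. -/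
theorem fiber_of_projection_card (n : ℕ) (S : FullPlacement n)
    (hS : ∀ c : Fin n, blockSize S c ≤ 2) :
    Nat.card {R : RookPlacement n // Projects R S} = 2 ^ bso S := by
  rw [Nat.card_congr fiberEquiv]
  simp only [HasBlockCounts]
  rw [card_finset_forall_card_fiber_eq, bso_eq]
  simp only [card_stairBlock_eq]
  exact prod_choose_two_eq_pow _ (card_shapeBlock_fiber_le_two S hS)
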